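/- arXiv:2411.13141 — 3 statements merged into one kernel-verified Lean document; each statement's English description precedes it below -/
import Mathlib

section
/- Let U be a finite set, F = (S_1, …, S_m) a family of subsets of U, and G(U,F) the associated split graph. If H ⊆ U is nonempty and satisfies H ∩ S_j ≠ ∅ for every j ∈ [m], then the function f on the vertices of G(U,F) defined by f(v) = 2 for v ∈ H and f(v) = 0 otherwise is a Roman dominating function on G(U,F) of weight 2|H|. -/
/-! Labelling the vertices of a dominating set by `2` always gives a Roman dominating function,
and `H` dominates `G(U,F)`: a universe vertex outside `H` is adjacent to any vertex of `H`
(the universe is a clique and `H ≠ ∅`), and `s_j^i` is adjacent to a vertex of `H ∩ S_j`. -/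

/-- Adjacency of the split graph `G(U,F)`: the universe `α` forms a clique, each set
`S_j` has two corresponding set-vertices `s_j^1, s_j^2` (encoded as `(j, i) : Fin m × Fin 2`),
and `u ∈ α` is adjacent to `s_j^i` iff `u ∈ S_j`; the set-vertices are pairwise non-adjacent. -/
def splitAdj {α : Type*} {m : ℕ} (F : Fin m → Finset α) :
    (α ⊕ Fin m × Fin 2) → (α ⊕ Fin m × Fin 2) → Prop
  | .inl u, .inl v => u ≠ v
  | .inl u, .inr p => u ∈ F p.1
  | .inr p, .inl u => u ∈ F p.1
  | .inr _, .inr _ => False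

/-- The split graph `G(U,F)`. -/
def splitGraph {α : Type*} {m : ℕ} (F : Fin m → Finset α) :
    SimpleGraph (α ⊕ Fin m × Fin 2) where
  Adj := splitAdj F
  symm := ⟨by rintro (u|p) (v|q) h <;> simp_all [splitAdj]; exact Ne.symm h⟩
  loopless := ⟨by rintro (u|p) h <;> simp_all [splitAdj]⟩

open Finset

section RomanDomination

variable {V : Type*} (G : SimpleGraph V)

def IsRomanDominating (f : V → ℕ) : Prop :=
  (∀ x, f x ≤ 2) ∧ ∀ x, f x = 0 → ∃ y, G.Adj x y ∧ f y = 2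

variable [DecidableEq V] (D : Finset V)

theorem isRomanDominating_two_mul_indicator (hD : ∀ x ∉ D, ∃ y ∈ D, G.Adj x y) :
    IsRomanDominating G (fun x => if x ∈ D then 2 else 0) := by
  refine ⟨fun x => by dsimp only; split_ifs <;> omega, fun x hx => ?_⟩
  obtain ⟨y, hyD, hxy⟩ := hD x fun hxD => by simp [hxD] at hx
  exact ⟨y, hxy, if_pos hyD⟩

theorem sum_two_mul_indicator [Fintype V] :
    ∑ x, (if x ∈ D then 2 else 0) = 2 * #D := by
  rw [sum_ite_mem, univ_inter, sum_const, smul_eq_mul, mul_comm]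

end RomanDomination

theorem splitGraph_dominated_of_hitting {α : Type*} {m : ℕ} (F : Fin m → Finset α)
    {H : Finset α} (hHne : H.Nonempty) (hhit : ∀ j : Fin m, ∃ u ∈ H, u ∈ F j) :
    ∀ x ∉ H.disjSum (∅ : Finset (Fin m × Fin 2)),
      ∃ y ∈ H.disjSum (∅ : Finset (Fin m × Fin 2)), (splitGraph F).Adj x y := by
  rintro (v | p) hx
  · obtain ⟨u, hu⟩ := hHne
    refine ⟨.inl u, inl_mem_disjSum.2 hu, fun huv => ?_⟩
    exact hx (inl_mem_disjSum.2 (huv ▸ hu))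
  · obtain ⟨u, hu, huF⟩ := hhit p.1
    exact ⟨.inl u, inl_mem_disjSum.2 hu, huF⟩

/-- If `H ⊆ U` is a nonempty hitting set of `(U,F)`, then the function
assigning `2` to the vertices of `H` and `0` to every other vertex is a Roman
dominating function on the split graph `G(U,F)` of weight `2|H|`. -/
theorem splitGraph_hitting_set_gives_rdf
    {α : Type*} [Fintype α] [DecidableEq α] {m : ℕ} (F : Fin m → Finset α)
    (H : Finset α) (hHne : H.Nonempty)
    (hhit : ∀ j : Fin m, ∃ u ∈ H, u ∈ F j)
    (f : (α ⊕ Fin m × Fin 2) → ℕ)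
    (hf : ∀ x, f x = match x with
      | Sum.inl u => if u ∈ H then 2 else 0
      | Sum.inr _ => 0) :
    (∀ x, f x ≤ 2) ∧
    (∀ x, f x = 0 → ∃ y, (splitGraph F).Adj x y ∧ f y = 2) ∧
    (∑ x, f x) = 2 * H.card := by
  set D := H.disjSum (∅ : Finset (Fin m × Fin 2))
  have hfD : f = fun x => if x ∈ D then 2 else 0 := by
    funext x
    rcases x with u | p <;> simp [hf, D]
  subst hfD
  obtain ⟨hle, hdom⟩ := isRomanDominating_two_mul_indicator (splitGraph F) D
    (splitGraph_dominated_of_hitting F hHne hhit)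
  refine ⟨hle, hdom, ?_⟩
  rw [sum_two_mul_indicator, card_disjSum, card_empty, add_zero]
end

section
/- Let U be a finite set, F = (S_1, …, S_m) a family of nonempty subsets of U, G(U,F) the associated split graph, and t a nonnegative integer. If G(U,F) admits a Roman dominating function of weight at most 2t, then there exists a hitting set H ⊆ U of (U,F) with |H| ≤ t. -/
/-!
Let `f` be a Roman dominating function on `G(U,F)` and `A` the set of universe vertices
labelled `2`. A set `S_j` missed by `A` gives its two set-vertices no neighbour labelled `2`,
so both carry a positive label: such a `j` costs at least `2` in the weight, just like a vertex
of `A`. Hence `A`, completed by one element of each set it misses, is a hitting set of size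
at most `w(f) / 2`.
-/

open Finset

section SplitGraph

variable {α : Type*} {m : ℕ} (F : Fin m → Finset α)

theorem exists_hitting_set_card_le [DecidableEq α] (hne : ∀ j, (F j).Nonempty) (A : Finset α) :
    ∃ H : Finset α, (∀ j, ∃ u ∈ H, u ∈ F j) ∧ #H ≤ #A + #{j | Disjoint (F j) A} := by
  choose pick hpick using hne
  refine ⟨A ∪ image pick {j | Disjoint (F j) A}, fun j => ?_, ?_⟩
  · by_cases hj : Disjoint (F j) A
    · exact ⟨pick j, mem_union_right _ (mem_image_of_mem _ (by simpa using hj)), hpick j⟩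
    · obtain ⟨u, hu, huA⟩ := not_disjoint_iff.mp hj
      exact ⟨u, mem_union_left _ huA, hu⟩
  · exact (card_union_le _ _).trans (Nat.add_le_add_left card_image_le _)

theorem splitGraph_adj_inr_iff {p : Fin m × Fin 2} {y : α ⊕ Fin m × Fin 2} :
    (splitGraph F).Adj (.inr p) y ↔ ∃ u ∈ F p.1, y = .inl u := by
  rcases y with u | q <;> simp [splitGraph, splitAdj]

section RomanDomination

variable [Fintype α] (f : α ⊕ Fin m × Fin 2 → ℕ)
  (hdom : ∀ x, f x = 0 → ∃ y, (splitGraph F).Adj x y ∧ f y = 2)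
include hdom

theorem one_le_inr_of_disjoint {j : Fin m} (hj : Disjoint (F j) ({u | f (.inl u) = 2} : Finset α))
    (i : Fin 2) : 1 ≤ f (.inr (j, i)) := by
  by_contra! h
  obtain ⟨y, hadj, hy⟩ := hdom _ (Nat.lt_one_iff.mp h)
  obtain ⟨u, hu, rfl⟩ := (splitGraph_adj_inr_iff F).mp hadj
  exact disjoint_left.mp hj hu (by simpa using hy)

theorem two_mul_card_add_card_disjoint_le_sum [DecidableEq α] :
    2 * (#{u | f (.inl u) = 2} + #{j | Disjoint (F j) ({u | f (.inl u) = 2} : Finset α)}) ≤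
      ∑ x, f x := by
  set A : Finset α := {u | f (.inl u) = 2}
  have hA : #A • 2 ≤ ∑ u, f (.inl u) :=
    (card_nsmul_le_sum A _ 2 fun u hu => (mem_filter.mp hu).2.ge).trans
      (sum_le_sum_of_subset (subset_univ A))
  have hJ : #{j | Disjoint (F j) A} • 2 ≤ ∑ p : Fin m × Fin 2, f (.inr p) := by
    rw [Fintype.sum_prod_type]
    refine (card_nsmul_le_sum _ _ 2 fun j hj => ?_).trans (sum_le_sum_of_subset (subset_univ _))
    have h := one_le_inr_of_disjoint F f hdom (mem_filter.mp hj).2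
    simpa [Fin.sum_univ_two] using Nat.add_le_add (h 0) (h 1)
  rw [Fintype.sum_sum_type]
  simp only [smul_eq_mul] at hA hJ
  omega

end RomanDomination

end SplitGraph

/-- If the split graph `G(U,F)` (with all sets `S_j` nonempty) admits a
Roman dominating function of weight at most `2t`, then `(U,F)` has a hitting set of
size at most `t`. -/
theorem splitGraph_rdf_gives_hitting_set
    {α : Type*} [Fintype α] {m : ℕ} (F : Fin m → Finset α)
    (hne : ∀ j, (F j).Nonempty) (t : ℕ)
    (hrdf : ∃ f : (α ⊕ Fin m × Fin 2) → ℕ, (∀ x, f x ≤ 2) ∧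
      (∀ x, f x = 0 → ∃ y, (splitGraph F).Adj x y ∧ f y = 2) ∧
      (∑ x, f x) ≤ 2 * t) :
    ∃ H : Finset α, (∀ j : Fin m, ∃ u ∈ H, u ∈ F j) ∧ H.card ≤ t := by
  classical
  obtain ⟨f, -, hdom, hw⟩ := hrdf
  obtain ⟨H, hH, hcard⟩ := exists_hitting_set_card_le F hne {u | f (.inl u) = 2}
  have hweight := two_mul_card_add_card_disjoint_le_sum F f hdom
  exact ⟨H, hH, by omega⟩
end

section
/- In the SCP dynamic-programming setting, suppose index j+1 exists and blk(j+1) = blk(j) + 1 (i.e., S_{j+1} is the first set of its block and a previous block exists). Then for every W ⊆ α: OPT(W, j+1, 2) = 2 + OPT(W \ S_{j+1}, j, flag(blk(j))), where arithmetic is in ℕ ∪ {∞} with 2 + ∞ = ∞. -/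
/-- `OPT S blk flag W j b` in the SCP dynamic-programming setting: the infimum, over all
index sets `X ⊆ {i : i ≤ j}` covering `W` and meeting every block `β_x` (`x ≤ blk j`)
whose (updated) flag is `2`, of `2|X|` plus the number of blocks `β_x` (`x ≤ blk j`)
with (updated) flag `1` that `X` misses; here the flag of block `blk j` is overridden
to be `b`.  The value is `∞` if no such `X` exists. -/
noncomputable def OPT {α : Type*} [DecidableEq α] {m q : ℕ}
    (S : Fin m → Finset α) (blk : Fin m → Fin q) (flag : Fin q → ℕ)
    (W : Finset α) (j : Fin m) (b : ℕ) : ℕ∞ :=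
  sInf { n : ℕ∞ | ∃ X : Finset (Fin m),
    (∀ i ∈ X, i ≤ j) ∧
    (W ⊆ X.biUnion S) ∧
    (∀ x : Fin q, x ≤ blk j → Function.update flag (blk j) b x = 2 →
      ∃ i ∈ X, blk i = x) ∧
    n = 2 * (X.card : ℕ∞) +
      ((Finset.univ.filter (fun x : Fin q =>
        x ≤ blk j ∧ Function.update flag (blk j) b x = 1 ∧
          ∀ i ∈ X, blk i ≠ x)).card : ℕ∞) }

/-!
A set `X` feasible for `OPT(W, j+1, 2)` must meet the block `β_{blk(j+1)}`, and since that block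
starts at `j+1`, this forces `j+1 ∈ X`. Hence `X ↦ X \ {j+1}` is a bijection onto the sets
feasible for `OPT(W \ S_{j+1}, j, flag(blk j))`, with inverse `X' ↦ insert (j+1) X'`, and it
lowers the cost by exactly `2`: `|X|` drops by one, and the missed blocks of flag `1` are the same
on both sides because the new block has flag `2`.
-/

theorem Fin.covBy_of_val_eq_add_one {n : ℕ} {a b : Fin n} (h : (b : ℕ) = a + 1) : a ⋖ b :=
  ⟨Fin.lt_def.mpr (by omega), fun c hac hcb => by rw [Fin.lt_def] at hac hcb; omega⟩

namespace SCP

open Finset Function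

variable {α : Type*} [DecidableEq α] {m q : ℕ}

/-- Feasibility in the infimum defining `OPT`; here `flag` stands for the already updated flags. -/
def Feasible (S : Fin m → Finset α) (blk : Fin m → Fin q) (flag : Fin q → ℕ)
    (W : Finset α) (j : Fin m) (X : Finset (Fin m)) : Prop :=
  (∀ i ∈ X, i ≤ j) ∧ W ⊆ X.biUnion S ∧ ∀ x ≤ blk j, flag x = 2 → ∃ i ∈ X, blk i = x

def cost (blk : Fin m → Fin q) (flag : Fin q → ℕ) (j : Fin m) (X : Finset (Fin m)) : ℕ∞ :=
  2 * (#X : ℕ∞) + (#{x | x ≤ blk j ∧ flag x = 1 ∧ ∀ i ∈ X, blk i ≠ x} : ℕ∞)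

theorem OPT_eq_iInf (S : Fin m → Finset α) (blk : Fin m → Fin q) (flag : Fin q → ℕ)
    (W : Finset α) (j : Fin m) (b : ℕ) :
    OPT S blk flag W j b = ⨅ X ∈ {X | Feasible S blk (update flag (blk j) b) W j X},
      cost blk (update flag (blk j) b) j X := by
  rw [OPT, ← sInf_image]
  congr 1
  ext n
  simp only [Set.mem_ofPred_eq, Set.mem_image, Feasible, cost, and_assoc, eq_comm]

section Succ

variable {S : Fin m → Finset α} {blk : Fin m → Fin q} {flag : Fin q → ℕ} {W : Finset α}
  {j j' : Fin m} {X : Finset (Fin m)}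

theorem Feasible.insert_succ (hj : j ⋖ j') (hb : blk j ⋖ blk j')
    (hX : Feasible S blk flag (W \ S j') j X) :
    Feasible S blk (update flag (blk j') 2) W j' (insert j' X) := by
  obtain ⟨hle, hcover, hmeet⟩ := hX
  refine ⟨?_, ?_, ?_⟩
  · simp only [mem_insert, forall_eq_or_imp]
    exact ⟨le_rfl, fun i hi => (hle i hi).trans hj.le⟩
  · intro w hw
    by_cases hwS : w ∈ S j'
    · exact mem_biUnion.mpr ⟨j', mem_insert_self _ _, hwS⟩
    · obtain ⟨i, hi, hwi⟩ := mem_biUnion.mp (hcover (mem_sdiff.mpr ⟨hw, hwS⟩))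
      exact mem_biUnion.mpr ⟨i, mem_insert_of_mem hi, hwi⟩
  · intro x hx h2
    rcases hx.lt_or_eq with hx | rfl
    · rw [update_of_ne hx.ne] at h2
      obtain ⟨i, hi, rfl⟩ := hmeet x (hb.le_of_lt hx) h2
      exact ⟨i, mem_insert_of_mem hi, rfl⟩
    · exact ⟨j', mem_insert_self _ _, rfl⟩

theorem Feasible.erase_succ (hmono : Monotone blk) (hj : j ⋖ j') (hb : blk j ⋖ blk j')
    (hX : Feasible S blk (update flag (blk j') 2) W j' X) :
    j' ∈ X ∧ Feasible S blk flag (W \ S j') j (X.erase j') := by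
  obtain ⟨hle, hcover, hmeet⟩ := hX
  have hlt : ∀ i ∈ X, i ≠ j' → i ≤ j := fun i hi hne => hj.le_of_lt ((hle i hi).lt_of_ne hne)
  have hj'X : j' ∈ X := by
    obtain ⟨i, hi, hbi⟩ := hmeet (blk j') le_rfl (update_self _ _ _)
    by_contra hj'X
    have := hmono (hlt i hi (ne_of_mem_of_not_mem hi hj'X))
    exact hb.lt.not_ge (hbi ▸ this)
  refine ⟨hj'X, fun i hi => hlt i (mem_of_mem_erase hi) (ne_of_mem_erase hi), ?_, ?_⟩
  · intro w hw
    obtain ⟨hwW, hwS⟩ := mem_sdiff.mp hw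
    obtain ⟨i, hi, hwi⟩ := mem_biUnion.mp (hcover hwW)
    exact mem_biUnion.mpr ⟨i, mem_erase.mpr ⟨fun h => hwS (h ▸ hwi), hi⟩, hwi⟩
  · intro x hx h2
    have hxlt : x < blk j' := hx.trans_lt hb.lt
    obtain ⟨i, hi, rfl⟩ := hmeet x hxlt.le (by rwa [update_of_ne hxlt.ne])
    exact ⟨i, mem_erase.mpr ⟨fun h => hxlt.ne (h ▸ rfl), hi⟩, rfl⟩

theorem setOf_feasible_succ (hmono : Monotone blk) (hj : j ⋖ j') (hb : blk j ⋖ blk j') :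
    {X | Feasible S blk (update flag (blk j') 2) W j' X} =
      insert j' '' {X | Feasible S blk flag (W \ S j') j X} := by
  ext X
  constructor
  · intro hX
    obtain ⟨hj'X, hX'⟩ := hX.erase_succ hmono hj hb
    exact ⟨_, hX', insert_erase hj'X⟩
  · rintro ⟨X', hX', rfl⟩
    exact hX'.insert_succ hj hb

theorem cost_insert_succ (hb : blk j ⋖ blk j') (hj'X : j' ∉ X) :
    cost blk (update flag (blk j') 2) j' (insert j' X) = 2 + cost blk flag j X := by
  have hmissed : univ.filter (fun x => x ≤ blk j' ∧ update flag (blk j') 2 x = 1 ∧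
      ∀ i ∈ insert j' X, blk i ≠ x) = univ.filter (fun x => x ≤ blk j ∧ flag x = 1 ∧
      ∀ i ∈ X, blk i ≠ x) := by
    ext x
    simp only [mem_filter, mem_univ, true_and, mem_insert, forall_eq_or_imp]
    constructor
    · rintro ⟨hx, h1, -, hmiss⟩
      rcases hx.lt_or_eq with hx | rfl
      · rw [update_of_ne hx.ne] at h1
        exact ⟨hb.le_of_lt hx, h1, hmiss⟩
      · simp at h1
    · rintro ⟨hx, h1, hmiss⟩
      have hxlt : x < blk j' := hx.trans_lt hb.lt
      exact ⟨hxlt.le, by rwa [update_of_ne hxlt.ne], hxlt.ne', hmiss⟩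
  rw [cost, cost, hmissed, card_insert_of_notMem hj'X]
  push_cast
  ring

end Succ

end SCP

theorem scp_recurrence_new_block_flag_two_general
    {α : Type*} [DecidableEq α] {m q : ℕ}
    (S : Fin m → Finset α) (blk : Fin m → Fin q)
    (hmono : Monotone blk)
    (flag : Fin q → ℕ)
    (j j' : Fin m) (hj' : (j' : ℕ) = (j : ℕ) + 1)
    (hblk : (blk j' : ℕ) = (blk j : ℕ) + 1)
    (W : Finset α) :
    OPT S blk flag W j' 2 = 2 + OPT S blk flag (W \ S j') j (flag (blk j)) := by
  have hj : j ⋖ j' := Fin.covBy_of_val_eq_add_one hj'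
  have hb : blk j ⋖ blk j' := Fin.covBy_of_val_eq_add_one hblk
  rw [SCP.OPT_eq_iInf, SCP.OPT_eq_iInf, Function.update_eq_self,
    SCP.setOf_feasible_succ hmono hj hb, iInf_image, ENat.add_iInf₂]
  refine iInf_congr fun X => iInf_congr fun hX => SCP.cost_insert_succ hb fun hj'X => ?_
  exact (hX.1 j' hj'X).not_gt hj.lt

/-- SCP recurrence when `S_{j+1}` is the first set of its block and a
previous block exists, for flag `b = 2`:
`OPT(W, j+1, 2) = 2 + OPT(W \\ S_{j+1}, j, flag(blk j))`. -/
theorem scp_recurrence_new_block_flag_two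
    {α : Type*} [DecidableEq α] {m q : ℕ} (hm : 0 < m) (hq : 0 < q)
    (S : Fin m → Finset α) (blk : Fin m → Fin q)
    (hmono : Monotone blk) (hsurj : Function.Surjective blk)
    (flag : Fin q → ℕ) (hflag : ∀ x, flag x ≤ 2)
    (j j' : Fin m) (hj' : (j' : ℕ) = (j : ℕ) + 1)
    (hblk : (blk j' : ℕ) = (blk j : ℕ) + 1)
    (W : Finset α) :
    OPT S blk flag W j' 2 = 2 + OPT S blk flag (W \ S j') j (flag (blk j)) :=
  scp_recurrence_new_block_flag_two_general S blk hmono flag j j' hj' hblk W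
end
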